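/- There exists a unique B > 0 satisfying √(2π)·(1−B²)·e^{B²/2}·Φ(B) = B, where Φ(y) = (2π)^{−1/2} ∫_{−∞}^{y} e^{−s²/2} ds is the standard normal cumulative distribution function. Moreover this B lies in (0,1). -/
import Mathlib

open MeasureTheory Set Real

/-- The standard normal cumulative distribution function. -/
noncomputable def stdNormalCDF (y : ℝ) : ℝ :=
  (Real.sqrt (2 * Real.pi))⁻¹ * ∫ s in Set.Iic y, Real.exp (-s ^ 2 / 2)

lemma integrable_gauss : Integrable (fun s : ℝ => Real.exp (-s ^ 2 / 2)) := by
  have := integrable_exp_neg_mul_sq (by norm_num : (0:ℝ) < 1/2)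
  convert this using 2 with s
  ring_nf

lemma cdf_pos (y : ℝ) : 0 < stdNormalCDF y := by
  have hc : 0 < Real.sqrt (2 * Real.pi) :=
    Real.sqrt_pos.2 (by positivity)
  have h : 0 < ∫ s in Set.Iic y, Real.exp (-s ^ 2 / 2) := by
    rw [setIntegral_pos_iff_support_of_nonneg_ae]
    · have : (Function.support fun s : ℝ => Real.exp (-s ^ 2 / 2)) = Set.univ := by
        ext s; simp [Function.support, (Real.exp_pos _).ne']
      rw [this, Set.univ_inter]
      simp
    · filter_upwards with s using (Real.exp_pos _).le
    · exact integrable_gauss.integrableOn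
  unfold stdNormalCDF
  exact mul_pos (inv_pos.2 hc) h

lemma hasDerivAt_cdf (y : ℝ) :
    HasDerivAt stdNormalCDF ((Real.sqrt (2 * Real.pi))⁻¹ * Real.exp (-y ^ 2 / 2)) y := by
  have key : ∀ x : ℝ, stdNormalCDF x =
      (Real.sqrt (2 * Real.pi))⁻¹ *
        ((∫ s in Set.Iic (0:ℝ), Real.exp (-s ^ 2 / 2)) +
          ∫ s in (0:ℝ)..x, Real.exp (-s ^ 2 / 2)) := by
    intro x
    unfold stdNormalCDF
    rw [← intervalIntegral.integral_Iic_sub_Iic integrable_gauss.integrableOn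
      integrable_gauss.integrableOn]
    ring
  have hFTC : HasDerivAt (fun u => ∫ s in (0:ℝ)..u, Real.exp (-s ^ 2 / 2))
      (Real.exp (-y ^ 2 / 2)) y := by
    exact intervalIntegral.integral_hasDerivAt_right
      (integrable_gauss.intervalIntegrable)
      (integrable_gauss.1.stronglyMeasurableAtFilter)
      (by continuity : Continuous fun s : ℝ => Real.exp (-s ^ 2 / 2)).continuousAt
  have := ((hFTC.const_add (∫ s in Set.Iic (0:ℝ), Real.exp (-s ^ 2 / 2))).const_mul
    (Real.sqrt (2 * Real.pi))⁻¹)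
  refine HasDerivAt.congr_of_eventuallyEq ?_ (Filter.Eventually.of_forall key)
  simpa [mul_comm] using this

noncomputable def sheppG (x : ℝ) : ℝ :=
  Real.sqrt (2 * Real.pi) * (1 - x ^ 2) * Real.exp (x ^ 2 / 2) * stdNormalCDF x - x

lemma hasDerivAt_sheppG (B : ℝ) :
    HasDerivAt sheppG
      (((Real.sqrt (2 * Real.pi) * -(2 * B) * Real.exp (B ^ 2 / 2) +
          Real.sqrt (2 * Real.pi) * (1 - B ^ 2) * (Real.exp (B ^ 2 / 2) * B)) * stdNormalCDF B +
        Real.sqrt (2 * Real.pi) * (1 - B ^ 2) * Real.exp (B ^ 2 / 2) *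
          ((Real.sqrt (2 * Real.pi))⁻¹ * Real.exp (-B ^ 2 / 2))) - 1) B := by
  have h1 : HasDerivAt (fun x : ℝ => Real.sqrt (2 * Real.pi) * (1 - x ^ 2))
      (Real.sqrt (2 * Real.pi) * -(2 * B)) B := by
    have : HasDerivAt (fun x : ℝ => 1 - x ^ 2) (-(2 * B)) B := by
      simpa using (hasDerivAt_pow 2 B).const_sub 1
    exact this.const_mul _
  have h2 : HasDerivAt (fun x : ℝ => Real.exp (x ^ 2 / 2)) (Real.exp (B ^ 2 / 2) * B) B := by
    have hin : HasDerivAt (fun x : ℝ => x ^ 2 / 2) B B := by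
      simpa using (hasDerivAt_pow 2 B).div_const 2
    exact hin.exp
  exact ((h1.mul h2).mul (hasDerivAt_cdf B)).sub (hasDerivAt_id B)

lemma sheppG_deriv_neg {B : ℝ} (hB : 0 < B) : deriv sheppG B < 0 := by
  rw [(hasDerivAt_sheppG B).deriv]
  have hc : 0 < Real.sqrt (2 * Real.pi) := Real.sqrt_pos.2 (by positivity)
  have hcc : Real.sqrt (2 * Real.pi) * (Real.sqrt (2 * Real.pi))⁻¹ = 1 :=
    mul_inv_cancel₀ hc.ne'
  have hee : Real.exp (B ^ 2 / 2) * Real.exp (-B ^ 2 / 2) = 1 := by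
    rw [← Real.exp_add]; ring_nf; exact Real.exp_zero
  have hΦ : 0 < stdNormalCDF B := cdf_pos B
  have hE : 0 < Real.exp (B ^ 2 / 2) := Real.exp_pos _
  have h3 : Real.sqrt (2 * Real.pi) * (1 - B ^ 2) * Real.exp (B ^ 2 / 2) *
      ((Real.sqrt (2 * Real.pi))⁻¹ * Real.exp (-B ^ 2 / 2)) = 1 - B ^ 2 := by
    have h4 : Real.sqrt (2 * Real.pi) * (1 - B ^ 2) * Real.exp (B ^ 2 / 2) *
        ((Real.sqrt (2 * Real.pi))⁻¹ * Real.exp (-B ^ 2 / 2)) =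
        (1 - B ^ 2) * (Real.sqrt (2 * Real.pi) * (Real.sqrt (2 * Real.pi))⁻¹) *
          (Real.exp (B ^ 2 / 2) * Real.exp (-B ^ 2 / 2)) := by ring
    rw [h4, hcc, hee]; ring
  rw [h3]
  have hP : 0 < Real.sqrt (2 * Real.pi) * B * Real.exp (B ^ 2 / 2) * stdNormalCDF B :=
    mul_pos (mul_pos (mul_pos hc hB) hE) hΦ
  nlinarith [hP, mul_nonneg hP.le (sq_nonneg B)]

lemma sheppG_strictAnti : StrictAntiOn sheppG (Set.Ici 0) := by
  refine strictAntiOn_of_deriv_neg (convex_Ici 0) ?_ ?_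
  · exact Continuous.continuousOn (by
      exact continuous_iff_continuousAt.2 fun x => (hasDerivAt_sheppG x).continuousAt)
  · intro x hx
    rw [interior_Ici] at hx
    exact sheppG_deriv_neg hx

lemma eq_lt_one {B : ℝ} (hB : 0 < B)
    (heq : Real.sqrt (2 * Real.pi) * (1 - B ^ 2) * Real.exp (B ^ 2 / 2) * stdNormalCDF B = B) :
    B < 1 := by
  by_contra h
  push_neg at h
  have hc : 0 < Real.sqrt (2 * Real.pi) := Real.sqrt_pos.2 (by positivity)
  have hE : 0 < Real.exp (B ^ 2 / 2) := Real.exp_pos _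
  have hΦ : 0 < stdNormalCDF B := cdf_pos B
  have h1 : 1 - B ^ 2 ≤ 0 := by nlinarith
  nlinarith [mul_pos (mul_pos hc hE) hΦ]

theorem shepp_constant_exists_unique :
    (∃! B : ℝ, 0 < B ∧
      Real.sqrt (2 * Real.pi) * (1 - B ^ 2) * Real.exp (B ^ 2 / 2) * stdNormalCDF B = B) ∧
    (∀ B : ℝ, 0 < B →
      Real.sqrt (2 * Real.pi) * (1 - B ^ 2) * Real.exp (B ^ 2 / 2) * stdNormalCDF B = B →
      B < 1) := by
  have hcont : ContinuousOn sheppG (Set.Icc 0 1) :=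
    Continuous.continuousOn (continuous_iff_continuousAt.2 fun x =>
      (hasDerivAt_sheppG x).continuousAt)
  have hg0 : 0 < sheppG 0 := by
    have hc : 0 < Real.sqrt (2 * Real.pi) := Real.sqrt_pos.2 (by positivity)
    have hΦ : 0 < stdNormalCDF 0 := cdf_pos 0
    simp only [sheppG]
    norm_num
    positivity
  have hg1 : sheppG 1 < 0 := by simp [sheppG]
  obtain ⟨B, hBmem, hBeq⟩ : ∃ B ∈ Set.Icc (0:ℝ) 1, sheppG B = 0 := by
    have := intermediate_value_Icc' (by norm_num : (0:ℝ) ≤ 1) hcont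
    have h0 : (0:ℝ) ∈ Set.Icc (sheppG 1) (sheppG 0) := ⟨hg1.le, hg0.le⟩
    obtain ⟨B, hB, hBeq⟩ := this h0
    exact ⟨B, hB, hBeq⟩
  have hBpos : 0 < B := by
    rcases lt_or_eq_of_le hBmem.1 with h | h
    · exact h
    · exfalso; rw [← h] at hBeq; linarith
  have hBeq' : Real.sqrt (2 * Real.pi) * (1 - B ^ 2) * Real.exp (B ^ 2 / 2) * stdNormalCDF B
      = B := by
    have : sheppG B = 0 := hBeq
    unfold sheppG at this; linarith
  constructor
  · refine ⟨B, ⟨hBpos, hBeq'⟩, ?_⟩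
    rintro C ⟨hCpos, hCeq⟩
    have hC0 : sheppG C = 0 := by unfold sheppG; linarith
    exact sheppG_strictAnti.injOn (Set.mem_Ici.2 hCpos.le) (Set.mem_Ici.2 hBpos.le)
      (by rw [hC0, hBeq])
  · exact fun C hC hCeq => eq_lt_one hC hCeq
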